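/- Let G be a Gauss diagram that can be transformed by a sequence of n crossing changes into a Gauss diagram G' whose writhe polynomial vanishes, W_{G'}(t) = 0. Then the odd writhe satisfies |J(G)| ≤ 2n, where J(G) = ∑_{c ∈ Odd(G)} w(c) is the sum of the writhes of the chords of G whose index is odd (equivalently J(G) = ∑_{k odd} J_k(G)). -/

import Mathlib

open scoped Classical

/-- A Gauss diagram with `n` chords: the `2n` marked points live on the cyclic group
`ZMod (2*n)` (the oriented circle); each chord `i` is the ordered pair
`(tail i, head i)` of marked points and carries a sign (writhe) `sign i ∈ {+1, -1}`;
all `2n` endpoints are distinct. -/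
structure GaussDiagram (n : ℕ) where
  tail : Fin n → ZMod (2 * n)
  head : Fin n → ZMod (2 * n)
  sign : Fin n → ℤ
  sign_mem : ∀ i, sign i = 1 ∨ sign i = -1
  endpoints_inj : Function.Injective
    (fun p : Fin n × Bool => if p.2 then head p.1 else tail p.1)

namespace GaussDiagram

variable {n : ℕ}

/-- `x` lies on the open arc running in the circle's orientation from `a` to `b`. -/
def arcMem (a b x : ZMod (2 * n)) : Prop :=
  0 < (x - a).val ∧ (x - a).val < (b - a).val

/-- `x` lies on the open oriented arc from the tail to the head of chord `i`. -/
def inArc (G : GaussDiagram n) (i : Fin n) (x : ZMod (2 * n)) : Prop :=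
  arcMem (G.tail i) (G.head i) x

/-- Chords `i` and `j` are linked: exactly one endpoint of `j` lies on the open
oriented arc from the tail to the head of `i`. -/
def linked (G : GaussDiagram n) (i j : Fin n) : Prop :=
  Xor' (G.inArc i (G.tail j)) (G.inArc i (G.head j))

/-- Chord `j` crosses chord `i` from right to left. -/
def crossesRL (G : GaussDiagram n) (i j : Fin n) : Prop :=
  G.linked i j ∧ G.inArc i (G.head j)

/-- Chord `j` crosses chord `i` from left to right. -/
def crossesLR (G : GaussDiagram n) (i j : Fin n) : Prop :=
  G.linked i j ∧ G.inArc i (G.tail j)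

/-- The index of the chord `i`: `Ind(i) = r₊ − r₋ − l₊ + l₋`. -/
noncomputable def ind (G : GaussDiagram n) (i : Fin n) : ℤ :=
  ((Finset.univ.filter fun j => G.crossesRL i j ∧ G.sign j = 1).card : ℤ)
    - ((Finset.univ.filter fun j => G.crossesRL i j ∧ G.sign j = -1).card : ℤ)
    - ((Finset.univ.filter fun j => G.crossesLR i j ∧ G.sign j = 1).card : ℤ)
    + ((Finset.univ.filter fun j => G.crossesLR i j ∧ G.sign j = -1).card : ℤ)

/-- The `k`-th writhe `J_k(G)`: the number of positive chords of index `k` minus the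
number of negative chords of index `k`. -/
noncomputable def J (G : GaussDiagram n) (k : ℤ) : ℤ :=
  ((Finset.univ.filter fun i => G.ind i = k ∧ G.sign i = 1).card : ℤ)
    - ((Finset.univ.filter fun i => G.ind i = k ∧ G.sign i = -1).card : ℤ)

/-- The writhe polynomial `W_G(t) = ∑_{Ind(c) ≠ 0} w(c) t^{Ind(c)} = ∑_{k ≠ 0} J_k(G) t^k`. -/
noncomputable def writhePoly (G : GaussDiagram n) : LaurentPolynomial ℤ :=
  ∑ i ∈ Finset.univ.filter (fun i => G.ind i ≠ 0),
    LaurentPolynomial.C (G.sign i) * LaurentPolynomial.T (G.ind i)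

/-- The odd writhe `J(G) = ∑_{c ∈ Odd(G)} w(c)`. -/
noncomputable def oddWrithe (G : GaussDiagram n) : ℤ :=
  ∑ i ∈ Finset.univ.filter (fun i => Odd (G.ind i)), G.sign i

/-- `G'` is obtained from `G` by a crossing change at the chord `c`: the tail and head
of `c` are interchanged and its sign is negated, all other chords being unchanged. -/
def IsCrossingChangeAt (G G' : GaussDiagram n) (c : Fin n) : Prop :=
  G'.tail c = G.head c ∧ G'.head c = G.tail c ∧ G'.sign c = -G.sign c ∧
    ∀ j : Fin n, j ≠ c →
      G'.tail j = G.tail j ∧ G'.head j = G.head j ∧ G'.sign j = G.sign j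

/-- `G'` is obtained from `G` by a crossing change (at some chord). -/
def IsCrossingChange (G G' : GaussDiagram n) : Prop :=
  ∃ c, IsCrossingChangeAt G G' c

/-- `G'` is obtained from `G` by a sequence of `m` crossing changes. -/
def ChangedBy (m : ℕ) (G G' : GaussDiagram n) : Prop :=
  ∃ f : ℕ → GaussDiagram n, f 0 = G ∧ f m = G' ∧
    ∀ i < m, IsCrossingChange (f i) (f (i + 1))

end GaussDiagram

/-! A crossing change at `c` replaces the arc of `c` by the complementary arc, so every chord
linked with `c` now crosses it in the opposite direction: the index of `c` is negated, and the
index of every other chord `j` is unchanged, since the reversal of `c` and the flip of its sign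
cancel in the contribution of `c` to `Ind(j)`. Thus the odd chords stay the same and the odd
writhe changes by at most `2`. Moreover `2 J(G) = W_G(1) - W_G(-1)`, so `W_{G'} = 0` forces
`J(G') = 0`. -/

namespace GaussDiagram

variable {n : ℕ}

lemma arcMem_swap [NeZero (2 * n)] {a b x : ZMod (2 * n)} (hab : b ≠ a) (hxa : x ≠ a)
    (hxb : x ≠ b) : arcMem b a x ↔ ¬ arcMem a b x := by
  have hxa' : 0 < (x - a).val := ZMod.val_pos.2 (sub_ne_zero.2 hxa)
  have hxb' : 0 < (x - b).val := ZMod.val_pos.2 (sub_ne_zero.2 hxb)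
  have hba : 0 < (b - a).val := ZMod.val_pos.2 (sub_ne_zero.2 hab)
  have hba_lt : (b - a).val < 2 * n := ZMod.val_lt _
  have hxb_lt : (x - b).val < 2 * n := ZMod.val_lt _
  have hxa_eq : (x - a).val = ((x - b).val + (b - a).val) % (2 * n) := by
    rw [← ZMod.val_add, sub_add_sub_cancel]
  have hab_eq : (a - b).val = 2 * n - (b - a).val := by
    rw [← neg_sub, ZMod.neg_val, if_neg (sub_ne_zero.2 hab)]
  unfold arcMem
  rw [hab_eq]
  rcases Nat.lt_or_ge ((x - b).val + (b - a).val) (2 * n) with h | h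
  · rw [Nat.mod_eq_of_lt h] at hxa_eq
    omega
  · rw [Nat.mod_eq_sub_mod h, Nat.mod_eq_of_lt (by omega)] at hxa_eq
    omega

section Endpoints

variable (G : GaussDiagram n)

lemma tail_ne_head (i j : Fin n) : G.tail i ≠ G.head j := fun h => by
  simpa using G.endpoints_inj (a₁ := (i, false)) (a₂ := (j, true)) (by simpa using h)

lemma tail_injective : Function.Injective G.tail := fun i j h => by
  simpa using G.endpoints_inj (a₁ := (i, false)) (a₂ := (j, false)) (by simpa using h)

lemma head_injective : Function.Injective G.head := fun i j h => by
  simpa using G.endpoints_inj (a₁ := (i, true)) (a₂ := (j, true)) (by simpa using h)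

lemma not_linked_self (i : Fin n) : ¬ G.linked i i := by
  show ¬ Xor _ _
  simp [inArc, arcMem]

lemma crossesRL_iff (i j : Fin n) :
    G.crossesRL i j ↔ G.inArc i (G.head j) ∧ ¬ G.inArc i (G.tail j) := by
  show Xor _ _ ∧ _ ↔ _
  rw [xor_def]
  tauto

lemma crossesLR_iff (i j : Fin n) :
    G.crossesLR i j ↔ G.inArc i (G.tail j) ∧ ¬ G.inArc i (G.head j) := by
  show Xor _ _ ∧ _ ↔ _
  rw [xor_def]
  tauto

lemma ind_eq_sum (i : Fin n) :
    G.ind i = ∑ j, G.sign j * ((if G.crossesRL i j then 1 else 0)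
      - if G.crossesLR i j then 1 else 0) := by
  unfold ind
  simp only [Finset.card_filter, Nat.cast_sum, Nat.cast_ite, Nat.cast_one, Nat.cast_zero,
    ← Finset.sum_sub_distrib, ← Finset.sum_add_distrib]
  refine Finset.sum_congr rfl fun j _ => ?_
  rcases G.sign_mem j with h | h <;> split_ifs <;> simp_all

end Endpoints

section CrossingChange

variable {G G' : GaussDiagram n} {c : Fin n}

lemma sign_of_isCrossingChangeAt (hcc : IsCrossingChangeAt G G' c) (j : Fin n) :
    G'.sign j = G.sign j - if j = c then 2 * G.sign c else 0 := by
  rcases eq_or_ne j c with rfl | hj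
  · rw [hcc.2.2.1, if_pos rfl]
    ring
  · rw [(hcc.2.2.2 j hj).2.2, if_neg hj, sub_zero]

lemma inArc_of_isCrossingChangeAt_of_ne (hcc : IsCrossingChangeAt G G' c) {j : Fin n}
    (hj : j ≠ c) : G'.inArc j = G.inArc j := by
  unfold inArc
  rw [(hcc.2.2.2 j hj).1, (hcc.2.2.2 j hj).2.1]

lemma inArc_of_isCrossingChangeAt (hcc : IsCrossingChangeAt G G' c) {k : Fin n} (hk : k ≠ c)
    {x : ZMod (2 * n)} (hx : x = G.tail k ∨ x = G.head k) : G'.inArc c x ↔ ¬ G.inArc c x := by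
  have : NeZero (2 * n) := ⟨by have := c.pos; omega⟩
  unfold inArc
  rw [hcc.1, hcc.2.1]
  refine arcMem_swap (G.tail_ne_head c c).symm ?_ ?_ <;> rcases hx with rfl | rfl
  exacts [G.tail_injective.ne hk, (G.tail_ne_head c k).symm, G.tail_ne_head k c,
    G.head_injective.ne hk]

lemma ind_of_isCrossingChangeAt_of_ne (hcc : IsCrossingChangeAt G G' c) {j : Fin n}
    (hj : j ≠ c) : G'.ind j = G.ind j := by
  have harc := inArc_of_isCrossingChangeAt_of_ne hcc hj
  rw [ind_eq_sum, ind_eq_sum]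
  refine Finset.sum_congr rfl fun k _ => ?_
  rcases eq_or_ne k c with rfl | hk
  · obtain ⟨ht, hh, hs, -⟩ := hcc
    have hRL : G'.crossesRL j k ↔ G.crossesLR j k := by
      rw [crossesRL_iff, crossesLR_iff, harc, ht, hh]
    have hLR : G'.crossesLR j k ↔ G.crossesRL j k := by
      rw [crossesRL_iff, crossesLR_iff, harc, ht, hh]
    simp only [hs, hRL, hLR]
    ring
  · obtain ⟨htk, hhk, hsk⟩ := hcc.2.2.2 k hk
    simp only [crossesRL_iff, crossesLR_iff, harc, htk, hhk, hsk]

lemma ind_of_isCrossingChangeAt (hcc : IsCrossingChangeAt G G' c) : G'.ind c = -G.ind c := by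
  rw [ind_eq_sum, ind_eq_sum, ← Finset.sum_neg_distrib]
  refine Finset.sum_congr rfl fun k _ => ?_
  rcases eq_or_ne k c with rfl | hk
  · simp [crossesRL, crossesLR, not_linked_self]
  · obtain ⟨htk, hhk, hsk⟩ := hcc.2.2.2 k hk
    have htail := inArc_of_isCrossingChangeAt hcc hk (.inl rfl)
    have hhead := inArc_of_isCrossingChangeAt hcc hk (.inr rfl)
    have hRL : G'.crossesRL c k ↔ G.crossesLR c k := by
      rw [crossesRL_iff, crossesLR_iff, htk, hhk, htail, hhead, not_not, and_comm]
    have hLR : G'.crossesLR c k ↔ G.crossesRL c k := by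
      rw [crossesRL_iff, crossesLR_iff, htk, hhk, htail, hhead, not_not, and_comm]
    simp only [hsk, hRL, hLR]
    ring

lemma odd_ind_iff_of_isCrossingChangeAt (hcc : IsCrossingChangeAt G G' c) (j : Fin n) :
    Odd (G'.ind j) ↔ Odd (G.ind j) := by
  rcases eq_or_ne j c with rfl | hj
  · rw [ind_of_isCrossingChangeAt hcc, odd_neg]
  · rw [ind_of_isCrossingChangeAt_of_ne hcc hj]

lemma oddWrithe_of_isCrossingChangeAt (hcc : IsCrossingChangeAt G G' c) :
    G'.oddWrithe = G.oddWrithe - if Odd (G.ind c) then 2 * G.sign c else 0 := by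
  simp only [oddWrithe, odd_ind_iff_of_isCrossingChangeAt hcc, sign_of_isCrossingChangeAt hcc,
    Finset.sum_sub_distrib, Finset.sum_ite_eq', Finset.mem_filter, Finset.mem_univ, true_and]

end CrossingChange

lemma abs_oddWrithe_sub_le_two {G G' : GaussDiagram n} (hc : IsCrossingChange G G') :
    |G.oddWrithe - G'.oddWrithe| ≤ 2 := by
  obtain ⟨c, hcc⟩ := hc
  rw [oddWrithe_of_isCrossingChangeAt hcc, sub_sub_cancel]
  rcases G.sign_mem c with h | h <;> split_ifs <;> simp [h]

lemma abs_oddWrithe_sub_le_of_changedBy {m : ℕ} {G G' : GaussDiagram n}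
    (h : ChangedBy m G G') : |G.oddWrithe - G'.oddWrithe| ≤ 2 * m := by
  obtain ⟨f, rfl, rfl, hstep⟩ := h
  calc |(f 0).oddWrithe - (f m).oddWrithe|
      = |∑ i ∈ Finset.range m, ((f i).oddWrithe - (f (i + 1)).oddWrithe)| := by
        rw [Finset.sum_range_sub']
    _ ≤ ∑ i ∈ Finset.range m, |(f i).oddWrithe - (f (i + 1)).oddWrithe| :=
        Finset.abs_sum_le_sum_abs _ _
    _ ≤ ∑ _i ∈ Finset.range m, 2 := Finset.sum_le_sum fun i hi =>
        abs_oddWrithe_sub_le_two (hstep i (Finset.mem_range.1 hi))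
    _ = 2 * m := by simp [mul_comm]

open LaurentPolynomial in
lemma two_mul_oddWrithe (G : GaussDiagram n) :
    2 * G.oddWrithe =
      eval₂ (RingHom.id ℤ) 1 G.writhePoly - eval₂ (RingHom.id ℤ) (-1) G.writhePoly := by
  rw [writhePoly, map_sum, map_sum, ← Finset.sum_sub_distrib, oddWrithe, Finset.mul_sum,
    Finset.sum_filter, Finset.sum_filter]
  refine Finset.sum_congr rfl fun i _ => ?_
  simp only [eval₂_C_mul_T, RingHom.id_apply, one_zpow, Units.val_one]
  rcases Int.even_or_odd (G.ind i) with h | h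
  · simp [h.neg_one_zpow, Int.not_odd_iff_even.2 h]
  · have hne : G.ind i ≠ 0 := by
      rintro h0
      simp [h0] at h
    simp [h.neg_one_zpow, h, hne, two_mul]

lemma oddWrithe_eq_zero_of_writhePoly_eq_zero {G : GaussDiagram n} (h : G.writhePoly = 0) :
    G.oddWrithe = 0 := by
  have := G.two_mul_oddWrithe
  rw [h, map_zero, map_zero, sub_zero] at this
  omega

end GaussDiagram

/-- if `G` can be transformed by a sequence of `m` crossing changes into a
Gauss diagram `G'` with `W_{G'}(t) = 0`, then the odd writhe satisfies `|J(G)| ≤ 2m`. -/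
theorem abs_oddWrithe_le_of_changedBy {n : ℕ} (m : ℕ) (G G' : GaussDiagram n)
    (h : GaussDiagram.ChangedBy m G G') (h0 : G'.writhePoly = 0) :
    |G.oddWrithe| ≤ 2 * (m : ℤ) := by
  simpa [GaussDiagram.oddWrithe_eq_zero_of_writhePoly_eq_zero h0] using
    GaussDiagram.abs_oddWrithe_sub_le_of_changedBy h
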